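/- A minimal valid function π is a weak facet if and only if for every minimal valid function π', the inclusion E(π) ⊆ E(π') implies E(π) = E(π'). -/

import Mathlib

/-- A finite-support function `y : ℝ → ℕ` is feasible if `∑ r, r·y(r) − f ∈ ℤ`. -/
def Feasible (f : ℝ) (y : ℝ →₀ ℕ) : Prop :=
  ∃ z : ℤ, (∑ r ∈ y.support, r * (y r : ℝ)) - f = (z : ℝ)

/-- `π` is a valid function: nonnegative, and `∑ r, π(r)·y(r) ≥ 1` for every feasible `y`. -/
def Valid (f : ℝ) (π : ℝ → ℝ) : Prop :=
  (∀ x, 0 ≤ π x) ∧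
    ∀ y : ℝ →₀ ℕ, Feasible f y → 1 ≤ ∑ r ∈ y.support, π r * (y r : ℝ)

/-- A valid function is minimal if no other valid function is pointwise ≤ it. -/
def MinimalValid (f : ℝ) (π : ℝ → ℝ) : Prop :=
  Valid f π ∧ ¬ ∃ π' : ℝ → ℝ, Valid f π' ∧ (∀ x, π' x ≤ π x) ∧ π' ≠ π

/-- `P(π)`: the set of feasible `y` with `∑ r, π(r)·y(r) = 1`. -/
def Pset (f : ℝ) (π : ℝ → ℝ) : Set (ℝ →₀ ℕ) :=
  {y | Feasible f y ∧ ∑ r ∈ y.support, π r * (y r : ℝ) = 1}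

/-- `E(π) = {(x,y) : π(x) + π(y) = π(x+y)}`. -/
def Eset (π : ℝ → ℝ) : Set (ℝ × ℝ) :=
  {p | π p.1 + π p.2 = π (p.1 + p.2)}

/-- A valid function `π` is a facet if every valid `π'` with `P(π) ⊆ P(π')` equals `π`. -/
def IsFacet (f : ℝ) (π : ℝ → ℝ) : Prop :=
  Valid f π ∧ ∀ π' : ℝ → ℝ, Valid f π' → Pset f π ⊆ Pset f π' → π' = π

/-- A valid function `π` is a weak facet if every valid `π'` with `P(π) ⊆ P(π')`
has `P(π) = P(π')`. -/
def IsWeakFacet (f : ℝ) (π : ℝ → ℝ) : Prop :=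
  Valid f π ∧ ∀ π' : ℝ → ℝ, Valid f π' → Pset f π ⊆ Pset f π' → Pset f π = Pset f π'

/-- A valid function `π` is extreme if whenever `π = (π¹ + π²)/2` with `π¹, π²` valid,
then `π¹ = π² = π`. -/
def ExtremeFunc (f : ℝ) (π : ℝ → ℝ) : Prop :=
  Valid f π ∧ ∀ π₁ π₂ : ℝ → ℝ, Valid f π₁ → Valid f π₂ →
    (∀ x, π x = (π₁ x + π₂ x) / 2) → π₁ = π ∧ π₂ = π

/-- `π` is piecewise linear: there is a closed, discrete set `B ⊆ ℝ` of breakpoints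
such that `π` is affine on each connected component of `ℝ \ B`. -/
def PiecewiseLinear (π : ℝ → ℝ) : Prop :=
  ∃ B : Set ℝ, IsClosed B ∧
    (∀ x ∈ B, ∃ ε > (0 : ℝ), ∀ y ∈ B, |y - x| < ε → y = x) ∧
    (∀ x ∉ B, ∃ a b : ℝ, ∀ z ∈ connectedComponentIn Bᶜ x, π z = a * z + b)

/-- `π` is continuous piecewise linear. -/
def ContPiecewiseLinear (π : ℝ → ℝ) : Prop :=
  PiecewiseLinear π ∧ Continuous π

/-!
A valid function that fails subadditivity, periodicity modulo `ℤ` or the symmetry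
`π x + π (f - x) = 1` can be lowered at a single point and stay valid, so minimal valid functions
have all three properties. For minimal `π`, symmetry turns `(x, y) ∈ E(π)` into the statement that
the feasible triple `x, y, f - x - y` lies in `P(π)`, while subadditivity makes every `y ∈ P(π)` a
chain of additive steps of `π`, hence of `π'` whenever `E(π) ⊆ E(π')`. Thus
`E(π) ⊆ E(π') ↔ P(π) ⊆ P(π')` for minimal `π, π'`. Finally every valid function lies above a
minimal one (Zorn's lemma, valid functions forming a closed set of `ℝ → ℝ`), and lowering a valid
function can only enlarge `P`.
-/

theorem Multiset.sum_map_eq_count_nsmul_add {α M : Type*} [DecidableEq α] [AddCommMonoid M]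
    (g : α → M) (s : Multiset α) (x : α) :
    (s.map g).sum = s.count x • g x + ((s.filter (· ≠ x)).map g).sum := by
  conv_lhs => rw [← Multiset.filter_add_not (· = x) s]
  rw [Multiset.map_add, Multiset.sum_add, Multiset.filter_eq', Multiset.map_replicate,
    Multiset.sum_replicate]

theorem Multiset.sum_map_update {α M : Type*} [DecidableEq α] [AddCommMonoid M]
    (g : α → M) (x : α) (v : M) (s : Multiset α) :
    (s.map (Function.update g x v)).sum = s.count x • v + ((s.filter (· ≠ x)).map g).sum := by
  rw [Multiset.sum_map_eq_count_nsmul_add _ s x, Function.update_self]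
  congr 2
  exact Multiset.map_congr rfl fun a ha => Function.update_of_ne (Multiset.mem_filter.1 ha).2 v g

theorem Multiset.apply_sum_eq_sum_map_of_subadditive {M : Type*} [AddCommMonoid M]
    {φ ψ : M → ℝ} (hφ₀ : φ 0 = 0) (hφ : ∀ a b, φ (a + b) ≤ φ a + φ b) (hψ₀ : ψ 0 = 0)
    (hφψ : ∀ a b, φ a + φ b = φ (a + b) → ψ a + ψ b = ψ (a + b)) (s : Multiset M)
    (hs : (s.map φ).sum = φ s.sum) : (s.map ψ).sum = ψ s.sum := by
  induction s using Multiset.induction_on with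
  | empty => simp [hψ₀]
  | cons a s ih =>
    rw [Multiset.map_cons, Multiset.sum_cons, Multiset.sum_cons] at hs ⊢
    have hsub := hφ a s.sum
    have hs_le := Multiset.le_sum_of_subadditive φ hφ₀.le hφ s
    rw [ih (by linarith), hφψ a s.sum (by linarith)]

theorem Finsupp.sum_support_mul_eq_sum_map_toMultiset {α R : Type*} [CommSemiring R]
    (g : α → R) (y : α →₀ ℕ) : ∑ r ∈ y.support, g r * (y r : R) = (y.toMultiset.map g).sum := by
  rw [Finsupp.toMultiset_map, Finsupp.sum_toMultiset,
    Finsupp.sum_mapDomain_index (by simp) (fun _ _ _ => add_nsmul ..)]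
  simp [Finsupp.sum, nsmul_eq_mul, mul_comm]

section Valid

variable {f : ℝ} {π : ℝ → ℝ}

theorem feasible_iff {y : ℝ →₀ ℕ} : Feasible f y ↔ ∃ z : ℤ, y.toMultiset.sum = f + z := by
  simp only [Feasible, Finsupp.sum_support_mul_eq_sum_map_toMultiset (fun r => r),
    Multiset.map_id', sub_eq_iff_eq_add']

theorem valid_iff : Valid f π ↔ (∀ x, 0 ≤ π x) ∧
    ∀ (s : Multiset ℝ) (z : ℤ), s.sum = f + z → 1 ≤ (s.map π).sum := by
  simp only [Valid, feasible_iff, Finsupp.sum_support_mul_eq_sum_map_toMultiset]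
  refine and_congr_right fun _ => ⟨fun h s z hs => ?_, fun h y ⟨z, hz⟩ => h _ z hz⟩
  rw [← Multiset.toFinsupp_toMultiset s] at hs ⊢
  exact h _ ⟨z, hs⟩

theorem mem_Pset_iff {y : ℝ →₀ ℕ} : y ∈ Pset f π ↔
    (∃ z : ℤ, y.toMultiset.sum = f + z) ∧ (y.toMultiset.map π).sum = 1 := by
  rw [Pset, Set.mem_ofPred_eq, feasible_iff, Finsupp.sum_support_mul_eq_sum_map_toMultiset]

theorem Valid.sum_map_nonneg (hπ : Valid f π) (s : Multiset ℝ) : 0 ≤ (s.map π).sum :=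
  Multiset.sum_nonneg fun _ h => by
    obtain ⟨a, -, rfl⟩ := Multiset.mem_map.1 h
    exact hπ.1 a

theorem valid_update {x v : ℝ} (hπ : ∀ a, 0 ≤ π a) (hv : 0 ≤ v)
    (h : ∀ (s : Multiset ℝ) (z : ℤ), s.sum = f + z →
      1 ≤ s.count x • v + ((s.filter (· ≠ x)).map π).sum) :
    Valid f (Function.update π x v) := by
  refine valid_iff.2 ⟨fun a => ?_, fun s z hs => ?_⟩
  · rcases eq_or_ne a x with rfl | ha
    · simpa using hv
    · simpa [ha] using hπ a
  · rw [Multiset.sum_map_update]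
    exact h s z hs

theorem Valid.pset_subset_of_le {π' : ℝ → ℝ} (hπ : Valid f π) (hle : ∀ x, π x ≤ π' x) :
    Pset f π' ⊆ Pset f π := by
  rintro y ⟨hy, hy'⟩
  refine ⟨hy, le_antisymm ?_ (hπ.2 y hy)⟩
  rw [← hy']
  exact Finset.sum_le_sum fun r _ => mul_le_mul_of_nonneg_right (hle r) (Nat.cast_nonneg _)

theorem isClosed_setOf_valid (f : ℝ) : IsClosed {π : ℝ → ℝ | Valid f π} := by
  simp only [Valid, Set.ofPred_and, Set.ofPred_forall]
  exact (isClosed_iInter fun x => isClosed_le continuous_const (continuous_apply x)).inter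
    (isClosed_iInter fun y => isClosed_iInter fun _ => isClosed_le continuous_const (by fun_prop))

theorem exists_valid_le_of_isChain {c : Set (ℝ → ℝ)} (hcv : ∀ g ∈ c, Valid f g)
    (hc : IsChain (· ≤ ·) c) (hne : c.Nonempty) : ∃ m, Valid f m ∧ ∀ g ∈ c, m ≤ g := by
  have hbdd : BddBelow c := ⟨0, fun g hg => (hcv g hg).1⟩
  have : Nonempty c := hne.to_subtype
  have : IsDirected c (· ≥ ·) := ⟨fun a b => (hc.total a.2 b.2).elim
    (fun h => ⟨a, le_rfl, h⟩) (fun h => ⟨b, h, le_rfl⟩)⟩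
  have hlim : Filter.Tendsto (Subtype.val : c → ℝ → ℝ) Filter.atBot (nhds (sInf c)) :=
    tendsto_atBot_isGLB (Subtype.mono_coe _) (by rw [Subtype.range_coe]; exact isGLB_csInf hne hbdd)
  exact ⟨sInf c, (isClosed_setOf_valid f).mem_of_tendsto hlim (.of_forall fun g => hcv g g.2),
    fun g hg => csInf_le hbdd hg⟩

theorem Valid.exists_minimalValid_le (hπ : Valid f π) :
    ∃ m, MinimalValid f m ∧ m ≤ π := by
  obtain ⟨m, hmπ, hm⟩ := zorn_le_nonempty₀ (α := (ℝ → ℝ)ᵒᵈ) {g | Valid f (OrderDual.ofDual g)}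
    (fun c hcv hc g hg => exists_valid_le_of_isChain hcv hc.symm ⟨g, hg⟩) (OrderDual.toDual π) hπ
  exact ⟨OrderDual.ofDual m, ⟨hm.prop, fun ⟨g, hg, hgm, hne⟩ => hne (hm.eq_of_ge hg hgm)⟩, hmπ⟩

end Valid

namespace MinimalValid

variable {f : ℝ} {π : ℝ → ℝ}

theorem le_of_valid_update (hπ : MinimalValid f π) {x v : ℝ}
    (h : Valid f (Function.update π x v)) : π x ≤ v := by
  by_contra! hv
  refine hπ.2 ⟨_, h, fun a => ?_, fun he => hv.ne (by simpa using congrFun he x)⟩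
  rcases eq_or_ne a x with rfl | ha
  · simpa using hv.le
  · simp [ha]

/-- Replacing every occurrence of `r` in a feasible multiset by a copy of `m` keeps it feasible,
so lowering `π r` to the weight of `m` would give a smaller valid function. -/
theorem le_sum_map (hπ : MinimalValid f π) {m : Multiset ℝ} {r : ℝ} {z : ℤ}
    (hm : m.sum = r + z) : π r ≤ (m.map π).sum := by
  refine hπ.le_of_valid_update (valid_update hπ.1.1 (hπ.1.sum_map_nonneg m) fun s z₀ hs => ?_)
  have hsum := Multiset.sum_map_eq_count_nsmul_add id s r
  simp only [id_eq, Multiset.map_id'] at hsum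
  have := (valid_iff.1 hπ.1).2 (s.count r • m + s.filter (· ≠ r)) (z₀ + s.count r * z) ?_
  · simpa [Multiset.map_nsmul, Multiset.sum_nsmul] using this
  · simp only [Multiset.sum_add, Multiset.sum_nsmul, hm, nsmul_eq_mul] at hsum ⊢
    push_cast
    linarith

theorem map_zero (hπ : MinimalValid f π) : π 0 = 0 :=
  le_antisymm (by simpa using hπ.le_sum_map (m := 0) (z := 0) (by simp)) (hπ.1.1 0)

theorem map_add_le (hπ : MinimalValid f π) (a b : ℝ) : π (a + b) ≤ π a + π b := by
  simpa using hπ.le_sum_map (m := {a, b}) (z := 0) (by simp)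

theorem map_add_intCast (hπ : MinimalValid f π) (x : ℝ) (z : ℤ) : π (x + z) = π x :=
  le_antisymm (by simpa using hπ.le_sum_map (m := {x}) (z := -z) (by simp))
    (by simpa using hπ.le_sum_map (m := {x + z}) (z := z) (by simp))

theorem map_add_map_sub (hπ : MinimalValid f π) (x : ℝ) : π x + π (f - x) = 1 := by
  refine le_antisymm ?_ ?_
  · by_contra! h
    -- the claim is symmetric under `x ↦ f - x`, and one of `π x`, `π (f - x)` is positive
    wlog hx : 0 < π x generalizing x
    · exact this (f - x) (by rwa [sub_sub_cancel, add_comm]) (by linarith)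
    set S := π x + π (f - x)
    have hS : 0 < S := by linarith
    -- if `π x + π (f - x) > 1`, scaling `π x` down by that factor keeps `π` valid
    refine (div_lt_self hx h).not_ge (hπ.le_of_valid_update
      (valid_update hπ.1.1 (by positivity) fun s z hs => ?_))
    have hW := Multiset.sum_map_eq_count_nsmul_add π s x
    have hR := hπ.1.sum_map_nonneg (s.filter (· ≠ x))
    have hslack : S ≤ (s.map π).sum + (S - 1) * ((s.filter (· ≠ x)).map π).sum := by
      rcases eq_or_ne (s.count x) 0 with hk | hk
      · have h1 := (valid_iff.1 hπ.1).2 s z hs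
        rw [hW, hk, zero_smul, zero_add] at h1 ⊢
        nlinarith
      · obtain ⟨t, rfl⟩ := Multiset.exists_cons_of_mem (Multiset.count_ne_zero.1 hk)
        rw [Multiset.sum_cons] at hs
        have ht := hπ.le_sum_map (m := t) (r := f - x) (z := z) (by linarith)
        rw [Multiset.map_cons, Multiset.sum_cons]
        nlinarith
    rw [nsmul_eq_mul] at hW ⊢
    rw [mul_div_assoc', div_add' _ _ _ hS.ne', le_div_iff₀ hS]
    linarith
  · simpa using (valid_iff.1 hπ.1).2 {x, f - x} 0 (by simp)

theorem map_self (hπ : MinimalValid f π) : π f = 1 := by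
  simpa [hπ.map_zero] using hπ.map_add_map_sub 0

theorem mem_Eset_iff_mem_Pset (hπ : MinimalValid f π) (x y : ℝ) :
    (x, y) ∈ Eset π ↔ Multiset.toFinsupp {x, y, f - x - y} ∈ Pset f π := by
  have hsymm := hπ.map_add_map_sub (x + y)
  rw [sub_add_eq_sub_sub] at hsymm
  simp only [Eset, mem_Pset_iff, Multiset.toFinsupp_toMultiset, Set.mem_ofPred_eq,
    Multiset.insert_eq_cons, Multiset.sum_cons, Multiset.sum_singleton, Multiset.map_cons,
    Multiset.map_singleton]
  exact ⟨fun h => ⟨⟨0, by ring⟩, by linarith⟩, fun h => by linarith [h.2]⟩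

theorem pset_subset_of_eset_subset {π' : ℝ → ℝ} (hπ : MinimalValid f π)
    (hπ' : MinimalValid f π') (hE : Eset π ⊆ Eset π') : Pset f π ⊆ Pset f π' := by
  intro y hy
  obtain ⟨⟨z, hz⟩, hy⟩ := mem_Pset_iff.1 hy
  refine mem_Pset_iff.2 ⟨⟨z, hz⟩, ?_⟩
  have htight := Multiset.apply_sum_eq_sum_map_of_subadditive hπ.map_zero hπ.map_add_le
    hπ'.map_zero (fun a b hab => hE (a := (a, b)) hab) y.toMultiset
    (by rw [hy, hz, hπ.map_add_intCast, hπ.map_self])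
  rw [htight, hz, hπ'.map_add_intCast, hπ'.map_self]

theorem eset_subset_iff_pset_subset {π' : ℝ → ℝ} (hπ : MinimalValid f π)
    (hπ' : MinimalValid f π') : Eset π ⊆ Eset π' ↔ Pset f π ⊆ Pset f π' :=
  ⟨pset_subset_of_eset_subset hπ hπ', fun hP ⟨x, y⟩ hxy =>
    (hπ'.mem_Eset_iff_mem_Pset x y).2 (hP ((hπ.mem_Eset_iff_mem_Pset x y).1 hxy))⟩

end MinimalValid

theorem stmt6_general (f : ℝ) (π : ℝ → ℝ)
    (hπ : MinimalValid f π) :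
    IsWeakFacet f π ↔
      ∀ π' : ℝ → ℝ, MinimalValid f π' → Eset π ⊆ Eset π' → Eset π = Eset π' := by
  constructor
  · rintro ⟨-, hW⟩ π' hπ' hE
    have hP := hW π' hπ'.1 ((hπ.eset_subset_iff_pset_subset hπ').1 hE)
    exact hE.antisymm ((hπ'.eset_subset_iff_pset_subset hπ).2 hP.ge)
  · refine fun hE => ⟨hπ.1, fun π' hπ' hP => hP.antisymm ?_⟩
    obtain ⟨m, hm, hmπ'⟩ := hπ'.exists_minimalValid_le
    have hPm : Pset f π' ⊆ Pset f m := hm.1.pset_subset_of_le hmπ'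
    have hEm := hE m hm ((hπ.eset_subset_iff_pset_subset hm).2 (hP.trans hPm))
    exact hPm.trans ((hm.eset_subset_iff_pset_subset hπ).1 hEm.ge)

theorem stmt6 (f : ℝ) (hf : f ∈ Set.Ioo (0 : ℝ) 1) (π : ℝ → ℝ)
    (hπ : MinimalValid f π) :
    IsWeakFacet f π ↔
      ∀ π' : ℝ → ℝ, MinimalValid f π' → Eset π ⊆ Eset π' → Eset π = Eset π' :=
  stmt6_general f π hπ
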